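/- arXiv:2108.03969 — 4 statements merged into one kernel-verified Lean document; each statement's English description precedes it below -/
import Mathlib

section
/- Let κ : [0, L] → R be a smooth L-periodic function that is not identically zero. Then there exists c > 0 such that for all L-periodic u ∈ H^1((0,L)), ‖u'‖²_{L^2((0,L))} + (1/2)‖κ u‖²_{L^2((0,L))} ≥ c‖u‖²_{L^2((0,L))}. -/
/-!
Near a point where `κ ≠ 0` there is an interval `[a, b] ⊆ [0, L]` on which `κ² ≥ δ > 0`.
For `s, t ∈ [0, L]`, `u(s)² - u(t)²` is bounded by `V = ∫ |2 u u'|`, and AM-GM gives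
`2L V ≤ ∫ u² + 4L² ∫ u'²`. Averaging `u(s)² ≤ u(t)² + V` over `t ∈ [a, b]` bounds `u(s)²` by
`(∫ (κu)²) / (δ (b - a)) + V`; integrating over `s` and absorbing the `∫ u²` coming from `V`
yields `∫ u² ≤ 4L² ∫ u'² + (2L / (δ (b - a))) ∫ (κu)²`.
-/

open Set intervalIntegral

theorem abs_sub_le_integral_abs_deriv {f : ℝ → ℝ} (hf : ContDiff ℝ 1 f) {p q s t : ℝ}
    (hs : s ∈ Icc p q) (ht : t ∈ Icc p q) : |f s - f t| ≤ ∫ x in p..q, |deriv f x| := by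
  wlog hts : t ≤ s generalizing s t
  · rw [abs_sub_comm]; exact this ht hs (le_of_not_ge hts)
  have hf' : Continuous (deriv f) := hf.continuous_deriv le_rfl
  calc |f s - f t| = |∫ x in t..s, deriv f x| := by
        rw [integral_deriv_eq_sub (fun x _ => hf.differentiable one_ne_zero x)
          (hf'.intervalIntegrable _ _)]
    _ ≤ ∫ x in t..s, |deriv f x| := abs_integral_le_integral_abs hts
    _ ≤ ∫ x in p..q, |deriv f x| :=
        integral_mono_interval ht.1 hts hs.2 (.of_forall fun _ => abs_nonneg _)
          (hf'.abs.intervalIntegrable _ _)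

theorem deriv_sq_eq {u : ℝ → ℝ} (hu : Differentiable ℝ u) (x : ℝ) :
    deriv (fun x => u x ^ 2) x = 2 * u x * deriv u x := by
  rw [deriv_fun_pow (hu x)]; norm_num

section

variable {u : ℝ → ℝ} {p q : ℝ}

theorem mul_sq_le_integral_sq_add (hu : ContDiff ℝ 1 u) {a b s : ℝ} (hpa : p ≤ a) (hab : a ≤ b)
    (hbq : b ≤ q) (hs : s ∈ Icc p q) :
    (b - a) * u s ^ 2 ≤
      (∫ t in a..b, u t ^ 2) + (b - a) * ∫ x in p..q, |2 * u x * deriv u x| := by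
  have huc : Continuous fun t => u t ^ 2 := hu.continuous.pow 2
  have hosc : ∀ t ∈ Icc a b, u s ^ 2 ≤ u t ^ 2 + ∫ x in p..q, |2 * u x * deriv u x| := by
    intro t ht
    have := abs_sub_le_integral_abs_deriv (hu.pow 2) hs ⟨hpa.trans ht.1, ht.2.trans hbq⟩
    simp only [deriv_sq_eq (hu.differentiable one_ne_zero)] at this
    linarith [le_abs_self (u s ^ 2 - u t ^ 2)]
  calc (b - a) * u s ^ 2 = ∫ _ in a..b, u s ^ 2 := by rw [integral_const, smul_eq_mul]
    _ ≤ ∫ t in a..b, (u t ^ 2 + ∫ x in p..q, |2 * u x * deriv u x|) :=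
        integral_mono_on hab intervalIntegrable_const
          ((huc.add continuous_const).intervalIntegrable _ _) hosc
    _ = _ := by
        rw [integral_add (huc.intervalIntegrable _ _) intervalIntegrable_const, integral_const,
          smul_eq_mul]

theorem integral_abs_two_mul_deriv_le (hu : ContDiff ℝ 1 u) (hpq : p ≤ q) (l : ℝ) :
    l * ∫ x in p..q, |2 * u x * deriv u x| ≤
      (∫ x in p..q, u x ^ 2) + l ^ 2 * ∫ x in p..q, deriv u x ^ 2 := by
  have hu'c : Continuous (deriv u) := hu.continuous_deriv le_rfl
  have hsq : Continuous fun x => u x ^ 2 := hu.continuous.pow 2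
  have hsq' : Continuous fun x => l ^ 2 * deriv u x ^ 2 := continuous_const.mul (hu'c.pow 2)
  have hprod : Continuous fun x => l * |2 * u x * deriv u x| :=
    continuous_const.mul ((continuous_const.mul hu.continuous).mul hu'c).abs
  have hpt : ∀ x ∈ Icc p q, l * |2 * u x * deriv u x| ≤ u x ^ 2 + l ^ 2 * deriv u x ^ 2 := by
    intro x _
    have := two_mul_le_add_sq |u x| (l * |deriv u x|)
    rw [sq_abs, mul_pow, sq_abs] at this
    rw [abs_mul, abs_mul, abs_two]
    linarith
  rw [← intervalIntegral.integral_const_mul, ← intervalIntegral.integral_const_mul,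
    ← integral_add (hsq.intervalIntegrable _ _) (hsq'.intervalIntegrable _ _)]
  exact integral_mono_on hpq (hprod.intervalIntegrable _ _)
    ((hsq.add hsq').intervalIntegrable _ _) hpt

end

theorem exists_Icc_forall_le_of_pos {g : ℝ → ℝ} (hg : Continuous g) {p q s : ℝ} (hpq : p < q)
    (hs : s ∈ Icc p q) (hgs : 0 < g s) :
    ∃ a b δ, p ≤ a ∧ a < b ∧ b ≤ q ∧ 0 < δ ∧ ∀ t ∈ Icc a b, δ ≤ g t := by
  obtain ⟨ε, hε, hball⟩ := Metric.eventually_nhds_iff.mp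
    (continuousAt_const.eventually_lt hg.continuousAt (half_lt_self hgs))
  refine ⟨max p (s - ε / 2), min q (s + ε / 2), g s / 2, le_max_left _ _, ?_, min_le_left _ _,
    half_pos hgs, fun t ht => (hball ?_).le⟩
  · simp only [max_lt_iff, lt_min_iff]
    refine ⟨⟨hpq, ?_⟩, ?_, ?_⟩ <;> linarith [hs.1, hs.2]
  · have := ht.1.trans' (le_max_right _ _)
    have := ht.2.trans (min_le_right _ _)
    rw [Real.dist_eq, abs_lt]
    constructor <;> linarith

theorem mul_integral_sq_le_integral_mul_sq {κ u : ℝ → ℝ} (hκ : Continuous κ) (hu : Continuous u)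
    {p q a b δ : ℝ} (hpa : p ≤ a) (hab : a ≤ b) (hbq : b ≤ q) (hκδ : ∀ t ∈ Icc a b, δ ≤ κ t ^ 2) :
    δ * ∫ t in a..b, u t ^ 2 ≤ ∫ t in p..q, (κ t * u t) ^ 2 := by
  have hκu : Continuous fun t => (κ t * u t) ^ 2 := (hκ.mul hu).pow 2
  calc δ * ∫ t in a..b, u t ^ 2 = ∫ t in a..b, δ * u t ^ 2 := (integral_const_mul _ _).symm
    _ ≤ ∫ t in a..b, (κ t * u t) ^ 2 :=
        integral_mono_on hab ((continuous_const.mul (hu.pow 2)).intervalIntegrable _ _)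
          (hκu.intervalIntegrable _ _) fun t ht => by
            rw [mul_pow]; exact mul_le_mul_of_nonneg_right (hκδ t ht) (sq_nonneg _)
    _ ≤ ∫ t in p..q, (κ t * u t) ^ 2 :=
        integral_mono_interval hpa hab hbq (.of_forall fun _ => sq_nonneg _)
          (hκu.intervalIntegrable _ _)

theorem integral_sq_le_mul_integral_deriv_sq_add_integral_mul_sq {κ u : ℝ → ℝ}
    (hκ : Continuous κ) (hu : ContDiff ℝ 1 u) {p q a b δ : ℝ} (hpa : p ≤ a) (hab : a < b)
    (hbq : b ≤ q) (hδ : 0 < δ) (hκδ : ∀ t ∈ Icc a b, δ ≤ κ t ^ 2) :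
    ∫ s in p..q, u s ^ 2 ≤ (4 * (q - p) ^ 2 + 4 * (q - p) / (δ * (b - a))) *
      ((∫ s in p..q, deriv u s ^ 2) + 1 / 2 * ∫ s in p..q, (κ s * u s) ^ 2) := by
  have hpq : p ≤ q := hpa.trans (hab.le.trans hbq)
  have hsq : Continuous fun s => u s ^ 2 := hu.continuous.pow 2
  set V := ∫ x in p..q, |2 * u x * deriv u x|
  have hJ :
      (b - a) * ∫ s in p..q, u s ^ 2 ≤ (q - p) * ((∫ t in a..b, u t ^ 2) + (b - a) * V) := by
    rw [← integral_const_mul, ← smul_eq_mul (q - p), ← integral_const]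
    exact integral_mono_on hpq ((continuous_const.mul hsq).intervalIntegrable _ _)
      intervalIntegrable_const fun s hs => mul_sq_le_integral_sq_add hu hpa hab.le hbq hs
  have hK := mul_integral_sq_le_integral_mul_sq hκ hu.continuous hpa hab.le hbq hκδ
  have hV := integral_abs_two_mul_deriv_le hu hpq (2 * (q - p))
  set J := ∫ s in p..q, u s ^ 2
  set I := ∫ s in p..q, deriv u s ^ 2
  set K := ∫ s in p..q, (κ s * u s) ^ 2
  have hI : 0 ≤ I := integral_nonneg hpq fun _ _ => sq_nonneg _
  have hK0 : 0 ≤ K := integral_nonneg hpq fun _ _ => sq_nonneg _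
  set m := δ * (b - a)
  have hm : 0 < m := mul_pos hδ (sub_pos.mpr hab)
  have hmJ : m * J ≤ 2 * (q - p) * K + 4 * (q - p) ^ 2 * m * I := by
    nlinarith [mul_le_mul_of_nonneg_left hJ hδ.le,
      mul_le_mul_of_nonneg_left hK (sub_nonneg.mpr hpq),
      mul_le_mul_of_nonneg_left hV (half_pos hm).le]
  have hmC : m * (4 * (q - p) ^ 2 + 4 * (q - p) / m) = 4 * (q - p) ^ 2 * m + 4 * (q - p) := by
    field_simp
  rw [← mul_le_mul_iff_of_pos_left hm, ← mul_assoc, hmC]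
  nlinarith [mul_nonneg (mul_nonneg (sq_nonneg (q - p)) hm.le) hK0,
    mul_nonneg (sub_nonneg.mpr hpq) hI]

theorem poincare_kappa_general (L : ℝ) (hL : 0 < L) (κ : ℝ → ℝ)
    (hκ : ContDiff ℝ (⊤ : ℕ∞) κ)
    (hκnz : ∃ s ∈ Set.Icc (0 : ℝ) L, κ s ≠ 0) :
    ∃ c > 0, ∀ u : ℝ → ℝ, ContDiff ℝ 1 u → Function.Periodic u L →
      c * ∫ s in (0 : ℝ)..L, (u s) ^ 2 ≤
        (∫ s in (0 : ℝ)..L, (deriv u s) ^ 2) +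
          (1 / 2) * ∫ s in (0 : ℝ)..L, (κ s * u s) ^ 2 := by
  obtain ⟨s, hs, hκs⟩ := hκnz
  obtain ⟨a, b, δ, h0a, hab, hbL, hδ, hκδ⟩ :=
    exists_Icc_forall_le_of_pos (hκ.continuous.pow 2) hL hs (sq_pos_of_ne_zero hκs)
  have hC : 0 < 4 * L ^ 2 + 4 * L / (δ * (b - a)) := by
    have := sub_pos.mpr hab
    positivity
  refine ⟨_, inv_pos.mpr hC, fun u hu _ => ?_⟩
  rw [inv_mul_le_iff₀ hC]
  simpa only [sub_zero] using
    integral_sq_le_mul_integral_deriv_sq_add_integral_mul_sq hκ.continuous hu h0a hab hbL hδ hκδ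

/-- Poincaré-type inequality: if `κ` is smooth, `L`-periodic and not identically zero, then
there is `c > 0` with `‖u'‖² + ½‖κu‖² ≥ c‖u‖²` (L² norms on `(0,L)`) for all `L`-periodic
`u ∈ H¹((0,L))` (represented by `C¹` periodic functions, dense in `H¹_p`). -/
theorem poincare_kappa (L : ℝ) (hL : 0 < L) (κ : ℝ → ℝ)
    (hκ : ContDiff ℝ (⊤ : ℕ∞) κ) (hκper : Function.Periodic κ L)
    (hκnz : ∃ s ∈ Set.Icc (0 : ℝ) L, κ s ≠ 0) :
    ∃ c > 0, ∀ u : ℝ → ℝ, ContDiff ℝ 1 u → Function.Periodic u L →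
      c * ∫ s in (0 : ℝ)..L, (u s) ^ 2 ≤
        (∫ s in (0 : ℝ)..L, (deriv u s) ^ 2) +
          (1 / 2) * ∫ s in (0 : ℝ)..L, (κ s * u s) ^ 2 :=
  poincare_kappa_general L hL κ hκ hκnz
end

section
/- Let ℓ ∈ N, consider the system on (0, 2π) with κ ≡ 1: u'''' − 2u'' − (w)'' − 2(w')' = η u and −2w'' + w − u'' − 2(u')' = 0, with all functions 2π-periodic. Then for each ℓ ≥ 0, the pair u(s) = A cos(ℓ s) + B sin(ℓ s), w(s) = −(3ℓ²/(1+2ℓ²)) u(s) solves the system with eigenvalue η = 2ℓ²(ℓ² − 1)²/(1 + 2ℓ²), for arbitrary constants A, B. -/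
open Real

lemma deriv_trig (A B c : ℝ) :
    deriv (fun t : ℝ => A * cos (c * t) + B * sin (c * t))
      = fun t : ℝ => (B * c) * cos (c * t) + (-(A * c)) * sin (c * t) := by
  funext t
  have hc : HasDerivAt (fun t : ℝ => c * t) c t := by
    simpa using (hasDerivAt_id t).const_mul c
  have h : HasDerivAt (fun t : ℝ => A * cos (c * t) + B * sin (c * t))
      (A * (-sin (c * t) * c) + B * (cos (c * t) * c)) t :=
    ((hc.cos.const_mul A).add (hc.sin.const_mul B))
  rw [h.deriv]; ring

lemma it2_trig (A B c : ℝ) (s : ℝ) :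
    iteratedDeriv 2 (fun t : ℝ => A * cos (c * t) + B * sin (c * t)) s
      = -(c ^ 2) * (A * cos (c * s) + B * sin (c * s)) := by
  rw [iteratedDeriv_succ, iteratedDeriv_one, deriv_trig, deriv_trig]
  ring

lemma it4_trig (A B c : ℝ) (s : ℝ) :
    iteratedDeriv 4 (fun t : ℝ => A * cos (c * t) + B * sin (c * t)) s
      = c ^ 4 * (A * cos (c * s) + B * sin (c * s)) := by
  rw [show (4 : ℕ) = 3 + 1 from rfl, iteratedDeriv_succ,
    show (3 : ℕ) = 2 + 1 from rfl, iteratedDeriv_succ,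
    iteratedDeriv_succ, iteratedDeriv_one,
    deriv_trig, deriv_trig, deriv_trig, deriv_trig]
  ring

/-- For the unit circle (`κ ≡ 1`, period `2π`), the pair
`u(s) = A cos(ℓs) + B sin(ℓs)`, `w = −(3ℓ²/(1+2ℓ²)) u` solves the limiting system
`u'''' − 2u'' − w'' − 2w'' = η u`, `−2w'' + w − u'' − 2u'' = 0`
with eigenvalue `η = 2ℓ²(ℓ²−1)²/(1+2ℓ²)`. -/
theorem circle_eigenpair (ℓ : ℕ) (A B : ℝ) :
    (Function.Periodic (fun s : ℝ => A * cos (ℓ * s) + B * sin (ℓ * s)) (2 * π) ∧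
      Function.Periodic
        (fun s : ℝ => -(3 * (ℓ : ℝ) ^ 2 / (1 + 2 * (ℓ : ℝ) ^ 2)) *
          (A * cos (ℓ * s) + B * sin (ℓ * s))) (2 * π)) ∧
    ∀ s : ℝ,
      (iteratedDeriv 4 (fun t : ℝ => A * cos (ℓ * t) + B * sin (ℓ * t)) s
        - 2 * iteratedDeriv 2 (fun t : ℝ => A * cos (ℓ * t) + B * sin (ℓ * t)) s
        - iteratedDeriv 2 (fun t : ℝ => -(3 * (ℓ : ℝ) ^ 2 / (1 + 2 * (ℓ : ℝ) ^ 2)) *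
            (A * cos (ℓ * t) + B * sin (ℓ * t))) s
        - 2 * iteratedDeriv 2 (fun t : ℝ => -(3 * (ℓ : ℝ) ^ 2 / (1 + 2 * (ℓ : ℝ) ^ 2)) *
            (A * cos (ℓ * t) + B * sin (ℓ * t))) s
        = (2 * (ℓ : ℝ) ^ 2 * ((ℓ : ℝ) ^ 2 - 1) ^ 2 / (1 + 2 * (ℓ : ℝ) ^ 2)) *
            (A * cos (ℓ * s) + B * sin (ℓ * s))) ∧
      (-2 * iteratedDeriv 2 (fun t : ℝ => -(3 * (ℓ : ℝ) ^ 2 / (1 + 2 * (ℓ : ℝ) ^ 2)) *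
            (A * cos (ℓ * t) + B * sin (ℓ * t))) s
        + (-(3 * (ℓ : ℝ) ^ 2 / (1 + 2 * (ℓ : ℝ) ^ 2)) * (A * cos (ℓ * s) + B * sin (ℓ * s)))
        - iteratedDeriv 2 (fun t : ℝ => A * cos (ℓ * t) + B * sin (ℓ * t)) s
        - 2 * iteratedDeriv 2 (fun t : ℝ => A * cos (ℓ * t) + B * sin (ℓ * t)) s = 0) := by
  set c : ℝ := (ℓ : ℝ) with hc
  set k : ℝ := -(3 * c ^ 2 / (1 + 2 * c ^ 2)) with hk
  have hper : ∀ s : ℝ, A * cos (c * (s + 2 * π)) + B * sin (c * (s + 2 * π))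
      = A * cos (c * s) + B * sin (c * s) := by
    intro s
    have h1 : c * (s + 2 * π) = c * s + ℓ * (2 * π) := by rw [hc]; ring
    rw [h1, Real.cos_add_nat_mul_two_pi, Real.sin_add_nat_mul_two_pi]
  have hw : (fun t : ℝ => k * (A * cos (c * t) + B * sin (c * t)))
      = fun t : ℝ => (k * A) * cos (c * t) + (k * B) * sin (c * t) := by
    funext t; ring
  have hden : (1 : ℝ) + 2 * c ^ 2 ≠ 0 := by positivity
  refine ⟨⟨fun s => hper s, fun s => by simp only []; rw [hper s]⟩, fun s => ?_⟩
  constructor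
  · rw [it4_trig, it2_trig, hw, it2_trig, hk]
    field_simp
    ring
  · rw [hw, it2_trig, it2_trig, hk]
    field_simp
    ring
end

section
/- Let L > 0 and κ : R → R be smooth and L-periodic. Consider the system on (0, L) with periodic boundary conditions: u'''' − 2(κ²u')' − (κw)'' − 2(κw')' = 0 and −2w'' + κ²w − κu'' − 2(κu')' = 0. If γ : [0, L] → R² is a smooth closed curve parametrized by arc length with curvature κ (with respect to the outward normal ν), then the pairs (u, w) = (1, 0) and (u, w) = (x_i ∘ γ, −ν_i) for i = 1, 2 solve the system, where x_i is the i-th coordinate function and ν_i the i-th component of the outward unit normal along γ. -/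
/-!
Write `g = γᵢ`, `n = νᵢ` and `w = -n`. The Frenet equation `g'' = -κ n` gives `(κ w)'' = g''''`,
and `n' = κ g'` gives `κ w' = -κ² g'` and `w'' = -(κ g')'`; both equations of the system then
cancel term by term.
-/

/-- `(u, w)` solves the limiting system
`u'''' − 2(κ²u')' − (κw)'' − 2(κw')' = 0`, `−2w'' + κ²w − κu'' − 2(κu')' = 0`. -/
def SolvesZeroSystem (κ u w : ℝ → ℝ) : Prop :=
  ∀ s : ℝ,
    (iteratedDeriv 4 u s - 2 * deriv (fun t => (κ t) ^ 2 * deriv u t) s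
      - iteratedDeriv 2 (fun t => κ t * w t) s
      - 2 * deriv (fun t => κ t * deriv w t) s = 0) ∧
    (-2 * iteratedDeriv 2 w s + (κ s) ^ 2 * w s - κ s * iteratedDeriv 2 u s
      - 2 * deriv (fun t => κ t * deriv u t) s = 0)

theorem solvesZeroSystem_const (κ : ℝ → ℝ) (c : ℝ) :
    SolvesZeroSystem κ (fun _ => c) (fun _ => 0) := fun _ => by
  simp [iteratedDeriv_eq_iterate]

theorem solvesZeroSystem_of_frenet {κ g n : ℝ → ℝ}
    (hg : ∀ s, deriv (deriv g) s = -κ s * n s) (hn : ∀ s, deriv n s = κ s * deriv g s) :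
    SolvesZeroSystem κ g (fun s => -n s) := by
  have hg₂ : deriv (deriv g) = fun t => -(κ t * n t) := funext fun t => by rw [hg]; ring
  have hκw : (fun t => κ t * -n t) = fun t => -(κ t * n t) := funext fun t => by ring
  have hκw₁ : (fun t => κ t * deriv (fun s => -n s) t) = fun t => -(κ t ^ 2 * deriv g t) :=
    funext fun t => by rw [deriv.fun_neg, hn]; ring
  have hw₁ : deriv (fun s => -n s) = fun t => -(κ t * deriv g t) :=
    funext fun t => by rw [deriv.fun_neg, hn]
  intro s
  simp only [iteratedDeriv_eq_iterate, Function.iterate_succ, Function.iterate_zero,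
    Function.comp_apply, id_eq]
  rw [hg₂, hκw, hκw₁, hw₁, deriv.fun_neg, deriv.fun_neg]
  constructor <;> beta_reduce <;> ring

theorem zero_eigenspace_of_limit_system_general
    (κ : ℝ → ℝ) (γ ν : ℝ → Fin 2 → ℝ)
    (hFrenet1 : ∀ i s, deriv (deriv fun t => γ t i) s = -(κ s) * ν s i)
    (hFrenet2 : ∀ i s, deriv (fun t => ν t i) s = κ s * deriv (fun t => γ t i) s) :
    SolvesZeroSystem κ (fun _ => 1) (fun _ => 0) ∧
      ∀ i : Fin 2, SolvesZeroSystem κ (fun s => γ s i) (fun s => -(ν s i)) :=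
  ⟨solvesZeroSystem_const κ 1, fun i => solvesZeroSystem_of_frenet (hFrenet1 i) (hFrenet2 i)⟩

/-- For a smooth closed arc-length parametrized curve `γ` with curvature `κ` and outward
normal `ν` (Frenet equations `γ'' = −κν`, `ν' = κγ'`), the pairs `(1, 0)` and
`(γᵢ, −νᵢ)`, `i = 1, 2`, solve the zero-eigenvalue limiting system. -/
theorem zero_eigenspace_of_limit_system (L : ℝ) (hL : 0 < L)
    (κ : ℝ → ℝ) (γ ν : ℝ → Fin 2 → ℝ)
    (hκ : ContDiff ℝ (⊤ : ℕ∞) κ) (hκper : Function.Periodic κ L)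
    (hγ : ∀ i, ContDiff ℝ (⊤ : ℕ∞) fun s => γ s i)
    (hν : ∀ i, ContDiff ℝ (⊤ : ℕ∞) fun s => ν s i)
    (hγper : Function.Periodic γ L)
    (hunit : ∀ s, (deriv (fun t => γ t 0) s) ^ 2 + (deriv (fun t => γ t 1) s) ^ 2 = 1)
    (hFrenet1 : ∀ i s, deriv (deriv fun t => γ t i) s = -(κ s) * ν s i)
    (hFrenet2 : ∀ i s, deriv (fun t => ν t i) s = κ s * deriv (fun t => γ t i) s) :
    SolvesZeroSystem κ (fun _ => 1) (fun _ => 0) ∧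
      ∀ i : Fin 2, SolvesZeroSystem κ (fun s => γ s i) (fun s => -(ν s i)) :=
  zero_eigenspace_of_limit_system_general κ γ ν hFrenet1 hFrenet2
end

section
/- For ℓ ∈ N, the pair u(s) = cos(ℓ s), w(s) = −(3ℓ²/(1+2ℓ²)) cos(ℓ s) satisfies the weak formulation: for all 2π-periodic test functions φ₁ ∈ H² and φ₂ ∈ H¹ on (0, 2π), ∫₀^{2π} [u''φ₁'' + 2u'φ₁' + w'φ₁' + 2w'φ₁' + 2w'φ₂' + u'φ₂' + 2u'φ₂' + wφ₂] ds = η ∫₀^{2π} u φ₁ ds with η = 2ℓ²(ℓ²−1)²/(1+2ℓ²). -/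
/-!
With `u = cos (ℓ s)` one has `u'' = -ℓ² u`, and `w = c u` with `c = -3ℓ²/(1+2ℓ²)`.
Integrating by parts over a period (the boundary terms cancel by periodicity), every term of the
weak form becomes a multiple of `∫ u φ₁` or `∫ u φ₂`. The coefficient of `∫ u φ₂` is
`(3 + 2c) ℓ² + c = 0`, which is what fixes `c`, and that of `∫ u φ₁` is `ℓ⁴ + (2 + 3c) ℓ² = η`.
-/

open Real

theorem iteratedDeriv_two_eq_deriv_deriv {𝕜 F : Type*} [NontriviallyNormedField 𝕜]
    [NormedAddCommGroup F] [NormedSpace 𝕜 F] (f : 𝕜 → F) :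
    iteratedDeriv 2 f = deriv (deriv f) := by
  rw [iteratedDeriv_succ, iteratedDeriv_one]

namespace Function.Periodic

variable {f g : ℝ → ℝ} {T : ℝ}

protected theorem deriv (hf : Periodic f T) : Periodic (_root_.deriv f) T := fun x => by
  rw [← deriv_comp_add_const, hf.funext]

theorem integral_mul_deriv_eq_neg_deriv_mul (hfT : Periodic f T) (hgT : Periodic g T)
    (hf : ContDiff ℝ 1 f) (hg : ContDiff ℝ 1 g) :
    ∫ x in 0..T, f x * _root_.deriv g x = -∫ x in 0..T, _root_.deriv f x * g x := by
  rw [intervalIntegral.integral_mul_deriv_eq_deriv_mul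
    (fun x _ => (hf.differentiable one_ne_zero x).hasDerivAt)
    (fun x _ => (hg.differentiable one_ne_zero x).hasDerivAt)
    ((hf.continuous_deriv le_rfl).intervalIntegrable _ _)
    ((hg.continuous_deriv le_rfl).intervalIntegrable _ _), hfT.eq, hgT.eq]
  ring

theorem integral_deriv_mul_deriv_eq_neg_iteratedDeriv_two_mul (hfT : Periodic f T)
    (hgT : Periodic g T) (hf : ContDiff ℝ 2 f) (hg : ContDiff ℝ 1 g) :
    ∫ x in 0..T, _root_.deriv f x * _root_.deriv g x
      = -∫ x in 0..T, iteratedDeriv 2 f x * g x := by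
  rw [iteratedDeriv_two_eq_deriv_deriv]
  exact hfT.deriv.integral_mul_deriv_eq_neg_deriv_mul hgT (hf.deriv' (n := 1)) hg

end Function.Periodic

theorem hasDerivAt_cos_mul (ω x : ℝ) :
    HasDerivAt (fun t => cos (ω * t)) (-ω * sin (ω * x)) x := by
  simpa [mul_comm] using ((hasDerivAt_id x).const_mul ω).cos

theorem deriv_cos_mul (ω : ℝ) : deriv (fun t => cos (ω * t)) = fun x => -ω * sin (ω * x) :=
  funext fun x => (hasDerivAt_cos_mul ω x).deriv

theorem iteratedDeriv_two_cos_mul (ω : ℝ) :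
    iteratedDeriv 2 (fun t => cos (ω * t)) = fun x => -ω ^ 2 * cos (ω * x) := by
  rw [iteratedDeriv_two_eq_deriv_deriv, deriv_cos_mul]
  funext x
  have h : HasDerivAt (fun t => sin (ω * t)) (ω * cos (ω * x)) x := by
    simpa [mul_comm] using ((hasDerivAt_id x).const_mul ω).sin
  rw [(h.const_mul (-ω)).deriv]
  ring

theorem periodic_cos_nat_mul (ℓ : ℕ) : Function.Periodic (fun t => cos (ℓ * t)) (2 * π) :=
  fun x => by
  simp [mul_add, cos_periodic.nat_mul ℓ (ℓ * x)]

section EigenfunctionIdentities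

variable (ℓ : ℕ) {φ : ℝ → ℝ}

theorem integral_deriv_cos_nat_mul_mul_deriv (hφT : Function.Periodic φ (2 * π))
    (hφ : ContDiff ℝ 1 φ) :
    ∫ s in (0 : ℝ)..(2 * π), deriv (fun t => cos (ℓ * t)) s * deriv φ s
      = (ℓ : ℝ) ^ 2 * ∫ s in (0 : ℝ)..(2 * π), cos (ℓ * s) * φ s := by
  rw [(periodic_cos_nat_mul ℓ).integral_deriv_mul_deriv_eq_neg_iteratedDeriv_two_mul hφT
      (by fun_prop) hφ,
    iteratedDeriv_two_cos_mul, ← intervalIntegral.integral_const_mul,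
    ← intervalIntegral.integral_neg]
  congr 1 with s
  ring

theorem integral_iteratedDeriv_two_cos_nat_mul_mul_iteratedDeriv_two
    (hφT : Function.Periodic φ (2 * π)) (hφ : ContDiff ℝ 2 φ) :
    ∫ s in (0 : ℝ)..(2 * π), iteratedDeriv 2 (fun t => cos (ℓ * t)) s * iteratedDeriv 2 φ s
      = (ℓ : ℝ) ^ 4 * ∫ s in (0 : ℝ)..(2 * π), cos (ℓ * s) * φ s := by
  have hIBP : ∫ s in (0 : ℝ)..(2 * π), cos (ℓ * s) * iteratedDeriv 2 φ s
      = -((ℓ : ℝ) ^ 2 * ∫ s in (0 : ℝ)..(2 * π), cos (ℓ * s) * φ s) := by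
    rw [iteratedDeriv_two_eq_deriv_deriv,
      (periodic_cos_nat_mul ℓ).integral_mul_deriv_eq_neg_deriv_mul hφT.deriv (by fun_prop)
        (hφ.deriv' (n := 1)),
      integral_deriv_cos_nat_mul_mul_deriv ℓ hφT (hφ.of_le one_le_two)]
  simp only [iteratedDeriv_two_cos_mul, mul_assoc, intervalIntegral.integral_const_mul, hIBP]
  ring

end EigenfunctionIdentities

/-- Weak formulation on the unit circle (`κ ≡ 1`, period `2π`): the pair
`u(s) = cos(ℓs)`, `w(s) = −(3ℓ²/(1+2ℓ²)) cos(ℓs)` satisfies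
`∫ u''φ₁'' + 2u'φ₁' + w'φ₁' + 2w'φ₁' + 2w'φ₂' + u'φ₂' + 2u'φ₂' + wφ₂ = η ∫ uφ₁`
for all `2π`-periodic test functions `φ₁ ∈ H²`, `φ₂ ∈ H¹` (represented by `C²` and
`C¹` periodic functions), with `η = 2ℓ²(ℓ²−1)²/(1+2ℓ²)`. -/
theorem circle_weak_formulation (ℓ : ℕ) :
    ∀ φ₁ φ₂ : ℝ → ℝ,
      ContDiff ℝ 2 φ₁ → Function.Periodic φ₁ (2 * π) →
      ContDiff ℝ 1 φ₂ → Function.Periodic φ₂ (2 * π) →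
      (∫ s in (0 : ℝ)..(2 * π),
        (iteratedDeriv 2 (fun t : ℝ => cos (ℓ * t)) s * iteratedDeriv 2 φ₁ s
          + 2 * deriv (fun t : ℝ => cos (ℓ * t)) s * deriv φ₁ s
          + deriv (fun t : ℝ => -(3 * (ℓ : ℝ) ^ 2 / (1 + 2 * (ℓ : ℝ) ^ 2)) * cos (ℓ * t)) s
              * deriv φ₁ s
          + 2 * deriv (fun t : ℝ => -(3 * (ℓ : ℝ) ^ 2 / (1 + 2 * (ℓ : ℝ) ^ 2)) * cos (ℓ * t)) s
              * deriv φ₁ s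
          + 2 * deriv (fun t : ℝ => -(3 * (ℓ : ℝ) ^ 2 / (1 + 2 * (ℓ : ℝ) ^ 2)) * cos (ℓ * t)) s
              * deriv φ₂ s
          + deriv (fun t : ℝ => cos (ℓ * t)) s * deriv φ₂ s
          + 2 * deriv (fun t : ℝ => cos (ℓ * t)) s * deriv φ₂ s
          + (-(3 * (ℓ : ℝ) ^ 2 / (1 + 2 * (ℓ : ℝ) ^ 2)) * cos (ℓ * s)) * φ₂ s))
      = (2 * (ℓ : ℝ) ^ 2 * ((ℓ : ℝ) ^ 2 - 1) ^ 2 / (1 + 2 * (ℓ : ℝ) ^ 2)) *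
          ∫ s in (0 : ℝ)..(2 * π), cos (ℓ * s) * φ₁ s := by
  intro φ₁ φ₂ hφ₁ hφ₁T hφ₂ hφ₂T
  set c : ℝ := -(3 * (ℓ : ℝ) ^ 2 / (1 + 2 * (ℓ : ℝ) ^ 2)) with hc
  have hφ₁' : Continuous (deriv φ₁) := hφ₁.continuous_deriv one_le_two
  have hφ₁'' : Continuous (iteratedDeriv 2 φ₁) := hφ₁.continuous_iteratedDeriv 2 le_rfl
  have hφ₂' : Continuous (deriv φ₂) := hφ₂.continuous_deriv le_rfl
  have hu' : Continuous (deriv fun t : ℝ => cos (ℓ * t)) := by rw [deriv_cos_mul]; fun_prop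
  have hu'' : Continuous (iteratedDeriv 2 fun t : ℝ => cos (ℓ * t)) := by
    rw [iteratedDeriv_two_cos_mul]; fun_prop
  rw [deriv_const_mul_field']
  calc _ = ∫ s in (0 : ℝ)..(2 * π),
          (iteratedDeriv 2 (fun t : ℝ => cos (ℓ * t)) s * iteratedDeriv 2 φ₁ s
            + (2 + 3 * c) * (deriv (fun t : ℝ => cos (ℓ * t)) s * deriv φ₁ s))
            + (3 + 2 * c) * (deriv (fun t : ℝ => cos (ℓ * t)) s * deriv φ₂ s)
            + c * (cos (ℓ * s) * φ₂ s) := by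
        congr 1 with s
        ring
    _ = (ℓ ^ 4 + (2 + 3 * c) * ℓ ^ 2) * (∫ s in (0 : ℝ)..(2 * π), cos (ℓ * s) * φ₁ s)
          + ((3 + 2 * c) * ℓ ^ 2 + c) * ∫ s in (0 : ℝ)..(2 * π), cos (ℓ * s) * φ₂ s := by
        rw [intervalIntegral.integral_add, intervalIntegral.integral_add,
          intervalIntegral.integral_add]
        · simp only [intervalIntegral.integral_const_mul,
            integral_iteratedDeriv_two_cos_nat_mul_mul_iteratedDeriv_two ℓ hφ₁T hφ₁,
            integral_deriv_cos_nat_mul_mul_deriv ℓ hφ₁T (hφ₁.of_le one_le_two),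
            integral_deriv_cos_nat_mul_mul_deriv ℓ hφ₂T hφ₂]
          ring
        all_goals exact Continuous.intervalIntegrable (by fun_prop) _ _
    _ = _ := by
        rw [hc]
        field_simp
        ring
end
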